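/- The language L' = {01^a 0^{b+1} 1^{c+1} 0^d 1 : a,b,c,d ≥ 1 and ∃y with 01^a 0^{b+1} 1^{c+1} 0^d 1 ∈ y ∐ y} equals {01^n 0^m (01) 1^n 0^m 1 : m,n ≥ 1}. -/

import Mathlib

/-!
If `0 1^a 0^(b+1) 1^(c+1) 0^d 1 ∈ y ∐ y`, one copy of `y` takes the initial `0`; the other copy
also starts with `0`, so the first copy takes the whole run `1^a` and `y = 0 1^a ⋯`. Following
the second copy's prefix `0 1^a` through the next two runs and counting `1`s forces `c = a`.
Reversing a word and exchanging `0` and `1` preserves self-shuffles and maps the parameters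
`(a, b, c, d)` to `(d, c, b, a)`, so the same argument gives `d = b`. Conversely
`0 1^n 0^m 0 1 1^n 0^m 1` interleaves two copies of `0 1^n 0^m 1` at the middle `0 1`.
-/

/-- `IsShuffle x y z` means `z` is an interleaving of `x` and `y`, preserving
the relative order of the letters of each; i.e. `z ∈ x ∐ y` (ordinary shuffle). -/
inductive IsShuffle {α : Type*} : List α → List α → List α → Prop
  | nil : IsShuffle [] [] []
  | left {x y z : List α} (a : α) : IsShuffle x y z → IsShuffle (a :: x) y (a :: z)
  | right {x y z : List α} (a : α) : IsShuffle x y z → IsShuffle x (a :: y) (a :: z)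

open List

namespace IsShuffle

variable {α : Type*} {x y z : List α}

theorem symm (h : IsShuffle x y z) : IsShuffle y x z := by
  induction h with
  | nil => exact .nil
  | left a _ ih => exact .right a ih
  | right a _ ih => exact .left a ih

theorem perm (h : IsShuffle x y z) : z ~ x ++ y := by
  induction h with
  | nil => exact .nil
  | left a _ ih => exact ih.cons a
  | right a _ ih => exact (ih.cons a).trans perm_middle.symm

theorem count_eq [BEq α] (h : IsShuffle x y z) (a : α) : z.count a = x.count a + y.count a := by
  rw [h.perm.count_eq, count_append]

theorem length_eq (h : IsShuffle x y z) : z.length = x.length + y.length := by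
  rw [h.perm.length_eq, length_append]

theorem nil_left : ∀ l : List α, IsShuffle [] l l
  | [] => .nil
  | a :: l => .right a (nil_left l)

theorem append_left (l : List α) (h : IsShuffle x y z) : IsShuffle (l ++ x) y (l ++ z) := by
  induction l with
  | nil => exact h
  | cons a l ih => exact .left a ih

theorem append_singleton_left (h : IsShuffle x y z) (a : α) :
    IsShuffle (x ++ [a]) y (z ++ [a]) := by
  induction h with
  | nil => exact .left a .nil
  | left b _ ih => exact .left b ih
  | right b _ ih => exact .right b ih

theorem append_singleton_right (h : IsShuffle x y z) (a : α) :
    IsShuffle x (y ++ [a]) (z ++ [a]) :=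
  (h.symm.append_singleton_left a).symm

theorem reverse (h : IsShuffle x y z) : IsShuffle x.reverse y.reverse z.reverse := by
  induction h with
  | nil => exact .nil
  | left a _ ih => simpa using ih.append_singleton_left a
  | right a _ ih => simpa using ih.append_singleton_right a

theorem map {β : Type*} (f : α → β) (h : IsShuffle x y z) :
    IsShuffle (x.map f) (y.map f) (z.map f) := by
  induction h with
  | nil => exact .nil
  | left a _ ih => exact .left (f a) ih
  | right a _ ih => exact .right (f a) ih

theorem cons_right_inv {a : α} (h : IsShuffle x y (a :: z)) :
    (∃ x', x = a :: x' ∧ IsShuffle x' y z) ∨ (∃ y', y = a :: y' ∧ IsShuffle x y' z) := by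
  cases h with
  | left _ h => exact .inl ⟨_, rfl, h⟩
  | right _ h => exact .inr ⟨_, rfl, h⟩

theorem exists_eq_cons_of_self {a : α} (h : IsShuffle y y (a :: z)) :
    ∃ t, y = a :: t ∧ IsShuffle t (a :: t) z := by
  cases h with
  | left _ h => exact ⟨_, rfl, h⟩
  | right _ h => exact ⟨_, rfl, h.symm⟩

/-- `j` counts the letters of the run `a^n` taken from the right word. -/
theorem exists_of_replicate_append {a b : α} (hab : a ≠ b) {k n : ℕ}
    (h : IsShuffle x (replicate k a ++ b :: y) (replicate n a ++ z)) :
    ∃ i j x', i + j = n ∧ j ≤ k ∧ x = replicate i a ++ x' ∧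
      IsShuffle x' (replicate (k - j) a ++ b :: y) z := by
  induction n generalizing x k with
  | zero => exact ⟨0, 0, x, rfl, k.zero_le, rfl, by simpa using h⟩
  | succ n ih =>
    rcases h.cons_right_inv with ⟨x', rfl, hx'⟩ | ⟨y', hy, hy'⟩
    · obtain ⟨i, j, x'', hn, hk, rfl, hx''⟩ := ih hx'
      exact ⟨i + 1, j, x'', by omega, hk, rfl, hx''⟩
    · cases k with
      | zero => exact absurd (cons_eq_cons.mp hy).1.symm hab
      | succ k =>
        obtain rfl := (cons_eq_cons.mp hy).2
        obtain ⟨i, j, x'', hn, hk, rfl, hx''⟩ := ih hy'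
        exact ⟨i, j + 1, x'', by omega, by omega, rfl, by simpa using hx''⟩

theorem exists_of_replicate_append_of_ne {a b : α} (hab : a ≠ b) {n : ℕ}
    (h : IsShuffle x (b :: y) (replicate n a ++ z)) :
    ∃ x', x = replicate n a ++ x' ∧ IsShuffle x' (b :: y) z := by
  obtain ⟨i, j, x', rfl, hj, rfl, hx'⟩ := exists_of_replicate_append (k := 0) hab h
  obtain rfl : j = 0 := by omega
  exact ⟨x', rfl, hx'⟩

end IsShuffle

def runWord (a b c d : ℕ) : List (Fin 2) :=
  [0] ++ replicate a 1 ++ replicate (b + 1) 0 ++ replicate (c + 1) 1 ++ replicate d 0 ++ [1]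

theorem runWord_reverse_map_rev (a b c d : ℕ) :
    (runWord a b c d).reverse.map Fin.rev = runWord d c b a := by
  simp [runWord]

theorem eq_of_isShuffle_self_runWord {a b c d : ℕ} (ha : 1 ≤ a) (hb : 1 ≤ b) {y : List (Fin 2)}
    (h : IsShuffle y y (runWord a b c d)) : c = a := by
  obtain ⟨a, rfl⟩ := Nat.exists_eq_add_of_le' ha
  obtain ⟨b, rfl⟩ := Nat.exists_eq_add_of_le' hb
  simp only [runWord, append_assoc, singleton_append] at h
  obtain ⟨t, rfl, h₀⟩ := h.exists_eq_cons_of_self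
  obtain ⟨t₁, rfl, h₁⟩ := h₀.exists_of_replicate_append_of_ne (by decide : (1 : Fin 2) ≠ 0)
  obtain ⟨i, j, t₂, hij, hj, rfl, h₂⟩ :=
    h₁.exists_of_replicate_append (k := 1) (by decide : (0 : Fin 2) ≠ 1)
  obtain rfl | rfl : j = 0 ∨ j = 1 := by omega
  · obtain ⟨t₃, rfl, h₃⟩ := h₂.exists_of_replicate_append_of_ne (by decide : (1 : Fin 2) ≠ 0)
    -- the second copy kept its `0` past the run `0^(b+2)`, so only one `1` is left for its `1^(a+1)`
    have hcount := h₃.count_eq 1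
    simp only [count_append, count_replicate, count_cons, count_nil, append_eq, replicate_zero,
      nil_append, Fin.reduceBEq, beq_self_eq_true, reduceIte, Bool.false_eq_true] at hcount
    omega
  · obtain rfl : i = b + 1 := by omega
    have h₂' : IsShuffle t₂ (replicate (a + 1) 1 ++ 0 :: (replicate b 0 ++ t₂))
        (replicate (c + 1) 1 ++ (replicate d 0 ++ [1])) := by
      simpa [replicate_succ] using h₂
    obtain ⟨p, q, t₃, hpq, hq, rfl, h₃⟩ :=
      h₂'.exists_of_replicate_append (by decide : (1 : Fin 2) ≠ 0)
    have hcount := h₃.count_eq 1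
    simp only [count_append, count_replicate, count_cons, count_nil, Fin.reduceBEq,
      beq_self_eq_true, reduceIte, Bool.false_eq_true] at hcount
    -- unless the first copy took exactly one `1` of the run, the second copy still holds a `1`
    -- followed by `0^(b+1)`, which cannot all precede the final `1`
    by_contra hca
    obtain rfl : p = 0 := by omega
    have h₃' : IsShuffle t₃ (1 :: 0 :: (replicate b 0 ++ t₃)) (replicate d 0 ++ [1]) := by
      rwa [show a + 1 - q = 1 by omega, replicate_one, replicate_zero, nil_append] at h₃
    obtain ⟨t₄, rfl, h₄⟩ := h₃'.exists_of_replicate_append_of_ne (by decide : (0 : Fin 2) ≠ 1)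
    have := h₄.length_eq
    simp only [length_cons, length_nil, length_append, length_replicate] at this
    omega

theorem runWord_self (n m : ℕ) :
    runWord n m n m = [0] ++ replicate n 1 ++ replicate m 0 ++ [0, 1] ++
      replicate n 1 ++ replicate m 0 ++ [1] := by
  rw [runWord, replicate_succ' (n := m), replicate_succ (n := n)]
  simp

theorem isShuffle_self_runWord (n m : ℕ) :
    IsShuffle ([0] ++ replicate n 1 ++ replicate m 0 ++ [1])
      ([0] ++ replicate n 1 ++ replicate m 0 ++ [1]) (runWord n m n m) := by
  have h := (IsShuffle.right (0 : Fin 2)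
    (.left 1 (.nil_left (replicate n 1 ++ replicate m 0 ++ [1])))).append_left
      ([0] ++ replicate n 1 ++ replicate m 0)
  rw [runWord_self]
  simpa using h

/-- The language L' of words of the form 0 1^a 0^(b+1) 1^(c+1) 0^d 1 (a,b,c,d ≥ 1)
that lie in the self-shuffle y ∐ y of some word y equals
{0 1^n 0^m (01) 1^n 0^m 1 : m, n ≥ 1}.  Alphabet: Fin 2. -/
theorem selfShuffle_intersection_char :
    {w : List (Fin 2) | (∃ a b c d : ℕ, 1 ≤ a ∧ 1 ≤ b ∧ 1 ≤ c ∧ 1 ≤ d ∧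
        w = [0] ++ List.replicate a 1 ++ List.replicate (b + 1) 0 ++
            List.replicate (c + 1) 1 ++ List.replicate d 0 ++ [1]) ∧
      ∃ y : List (Fin 2), IsShuffle y y w} =
    {w : List (Fin 2) | ∃ m n : ℕ, 1 ≤ m ∧ 1 ≤ n ∧
        w = [0] ++ List.replicate n 1 ++ List.replicate m 0 ++ [0, 1] ++
            List.replicate n 1 ++ List.replicate m 0 ++ [1]} := by
  ext w
  constructor
  · rintro ⟨⟨a, b, c, d, ha, hb, hc, hd, rfl⟩, y, hy⟩
    change IsShuffle y y (runWord a b c d) at hy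
    have hy' := hy.reverse.map Fin.rev
    rw [runWord_reverse_map_rev] at hy'
    have hca : c = a := eq_of_isShuffle_self_runWord ha hb hy
    have hbd : b = d := eq_of_isShuffle_self_runWord hd hc hy'
    subst hca hbd
    exact ⟨b, c, hb, hc, runWord_self c b⟩
  · rintro ⟨m, n, hm, hn, rfl⟩
    rw [← runWord_self]
    exact ⟨⟨n, m, n, m, hn, hm, hn, hm, rfl⟩, _, isShuffle_self_runWord n m⟩
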